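/- arXiv:2511.16583 — 2 statements merged into one kernel-verified Lean document; each statement's English description precedes it below -/
import Mathlib

section
/- Let p and s be distinct primes, d and a natural numbers with d ≥ 1, and let ŷ ∈ GL_d(F_{p^a}) be an element of order s. Then the index [N_{GL_d(p^a)}(⟨ŷ⟩) : C_{GL_d(p^a)}(ŷ)] is at most d. -/
/-!
Conjugation by an element of `N(⟨y⟩)` sends `y` to some `y ^ k`, and `N(⟨y⟩) / C(y)` is in
bijection with the conjugates of `y` that arise this way. Over the algebraic closure, `y` has an
eigenvalue `μ` of order `s`: otherwise `y` would be unipotent and so have `p`-power order. If `y`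
is conjugate to `y ^ k` then `μ ^ k` is again an eigenvalue, and distinct exponents `k < s` give
distinct eigenvalues `μ ^ k`, of which there are at most `d`.
-/

open Subgroup in
theorem Subgroup.relIndex_centralizer_normalizer_zpowers_le {G : Type*} [Group G] {y : G}
    (hy : IsOfFinOrder y) :
    (centralizer {y}).relIndex (normalizer (zpowers y : Set G)) ≤
      {k | k < orderOf y ∧ IsConj y (y ^ k)}.ncard := by
  classical
  set N := normalizer (zpowers y : Set G)
  set S := {k | k < orderOf y ∧ IsConj y (y ^ k)}
  have hS : S.Finite := (Set.finite_Iio _).subset fun k hk ↦ hk.1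
  let y' : zpowers y := ⟨y, mem_zpowers y⟩
  have hconj (g : N) : ((g • y' : zpowers y) : G) = g * y * (g : G)⁻¹ := rfl
  have hstab : (centralizer {y}).subgroupOf N = MulAction.stabilizer N y' := by
    ext g
    rw [mem_subgroupOf, mem_centralizer_singleton_iff, MulAction.mem_stabilizer_iff,
      Subtype.ext_iff, hconj, mul_inv_eq_iff_eq_mul, eq_comm]
  have horbit : MulAction.orbit N y' ⊆ (fun k ↦ ⟨y ^ k, npow_mem_zpowers y k⟩) '' S := by
    rintro _ ⟨g, rfl⟩
    obtain ⟨k, hk, hgy⟩ :=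
      Finset.mem_image.mp <| hy.mem_zpowers_iff_mem_range_orderOf.mp (g • y').2
    refine ⟨k, ⟨Finset.mem_range.mp hk, ?_⟩, Subtype.ext hgy⟩
    rw [hgy, hconj]
    exact isConj_iff.mpr ⟨g, rfl⟩
  rw [relIndex, hstab, MulAction.index_stabilizer]
  exact (Set.ncard_le_ncard horbit (hS.image _)).trans (Set.ncard_image_le hS)

theorem spectrum.pow_mem_of_isConj_pow {L A : Type*} [Field L] [Ring A] [Algebra L A] {x : A}
    {μ : L} (hμ : μ ∈ spectrum L x) {k : ℕ} (hk : IsConj x (x ^ k)) :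
    μ ^ k ∈ spectrum L x := by
  obtain ⟨u, hu⟩ := hk
  have hconj : (u : A) * x * ↑u⁻¹ = x ^ k := by rw [hu.eq, Units.mul_inv_cancel_right]
  rw [← spectrum.units_conjugate (u := u), hconj]
  exact spectrum.pow_mem_pow x k hμ

theorem ncard_setOf_isConj_pow_le_ncard_spectrum {G L A : Type*} [Monoid G] [Field L] [Ring A]
    [Algebra L A] (f : G →* A) {y : G} {μ : L} (hμ : μ ∈ spectrum L (f y))
    (hμy : orderOf μ = orderOf y) (hfin : (spectrum L (f y)).Finite) :
    {k | k < orderOf y ∧ IsConj y (y ^ k)}.ncard ≤ (spectrum L (f y)).ncard :=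
  Set.ncard_le_ncard_of_injOn (μ ^ ·)
    (fun k hk ↦ spectrum.pow_mem_of_isConj_pow hμ (map_pow f y k ▸ f.map_isConj hk.2))
    (pow_injOn_Iio_orderOf.mono fun _ hk ↦ hμy ▸ hk.1) hfin

theorem Matrix.ncard_spectrum_le {K n : Type*} [Field K] [Fintype n] [DecidableEq n]
    (M : Matrix n n K) : (spectrum K M).ncard ≤ Fintype.card n := by
  classical
  calc (spectrum K M).ncard = M.charpoly.roots.toFinset.card := by
        rw [← Set.ncard_coe_finset]
        congr 1
        ext μ
        simp [Matrix.mem_spectrum_iff_isRoot_charpoly, M.charpoly_monic.ne_zero]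
    _ ≤ Multiset.card M.charpoly.roots := Multiset.toFinset_card_le _
    _ ≤ M.charpoly.natDegree := Polynomial.card_roots' _
    _ = Fintype.card n := M.charpoly_natDegree_eq_dim

open Polynomial in
theorem Matrix.sub_algebraMap_pow_card_eq_zero_of_spectrum_subset {K n : Type*} [Field K]
    [IsAlgClosed K] [Fintype n] [DecidableEq n] {M : Matrix n n K} {μ : K}
    (h : spectrum K M ⊆ {μ}) : (M - algebraMap K _ μ) ^ Fintype.card n = 0 := by
  have hroots : M.charpoly.roots = Multiset.replicate (Fintype.card n) μ := by
    refine Multiset.eq_replicate.mpr ⟨?_, fun r hr ↦ h ?_⟩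
    · rw [← (IsAlgClosed.splits M.charpoly).natDegree_eq_card_roots, M.charpoly_natDegree_eq_dim]
    · rwa [Matrix.mem_spectrum_iff_isRoot_charpoly, ← mem_roots M.charpoly_monic.ne_zero]
  have hcharpoly : M.charpoly = (X - C μ) ^ Fintype.card n := by
    rw [(IsAlgClosed.splits M.charpoly).eq_prod_roots_of_monic M.charpoly_monic, hroots]
    simp
  simpa [hcharpoly] using M.aeval_self_charpoly

theorem exists_pow_char_pow_eq_one_of_isNilpotent_sub_one {R : Type*} [Ring R] (p : ℕ)
    [Fact p.Prime] [CharP R p] {x : R} (h : IsNilpotent (x - 1)) : ∃ k, x ^ p ^ k = 1 := by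
  obtain ⟨k, hk⟩ := h
  refine ⟨k, ?_⟩
  have hfrob := sub_pow_char_pow_of_commute p k (Commute.one_right x)
  rw [one_pow, pow_eq_zero_of_le (Nat.lt_pow_self (Fact.out : p.Prime).one_lt).le hk] at hfrob
  exact sub_eq_zero.mp hfrob.symm

theorem Matrix.exists_mem_spectrum_orderOf_eq {L n : Type*} [Field L] [IsAlgClosed L] [Fintype n]
    [DecidableEq n] (p : ℕ) [Fact p.Prime] [CharP L p] {M : Matrix n n L} {s : ℕ}
    (hs : s.Prime) (hps : p ≠ s) (hM : orderOf M = s) :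
    ∃ μ ∈ spectrum L M, orderOf μ = s := by
  have : Fact s.Prime := ⟨hs⟩
  by_contra! h
  have hM1 : M ≠ 1 := by
    rintro rfl
    exact hs.one_lt.ne (orderOf_one.symm.trans hM)
  have : Nontrivial (Matrix n n L) := nontrivial_of_ne M 1 hM1
  have : CharP (Matrix n n L) p := charP_of_injective_algebraMap (algebraMap L _).injective p
  have hspec : spectrum L M ⊆ {1} := by
    intro μ hμ
    have hμs : μ ^ s = 1 := by
      have := spectrum.pow_mem_pow M s hμ
      rwa [← hM, pow_orderOf_eq_one, spectrum.one_eq, Set.mem_singleton_iff, hM] at this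
    by_contra hμ1
    exact h μ hμ (orderOf_eq_prime hμs hμ1)
  have hunip : IsNilpotent (M - 1) :=
    ⟨_, by simpa using Matrix.sub_algebraMap_pow_card_eq_zero_of_spectrum_subset hspec⟩
  obtain ⟨k, hk⟩ := exists_pow_char_pow_eq_one_of_isNilpotent_sub_one p hunip
  have hdvd : s ∣ p ^ k := hM ▸ orderOf_dvd_of_pow_eq_one hk
  exact hps ((Nat.prime_dvd_prime_iff_eq hs Fact.out).mp (hs.dvd_of_dvd_pow hdvd)).symm

theorem stmt3_general (p s d a : ℕ) [Fact p.Prime] (hs : s.Prime) (hps : p ≠ s)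
    (y : GL (Fin d) (GaloisField p a)) (hy : orderOf y = s) :
    (Subgroup.centralizer {y}).relIndex (Subgroup.normalizer (Subgroup.zpowers y : Set (GL (Fin d) (GaloisField p a)))) ≤ d := by
  let L := AlgebraicClosure (GaloisField p a)
  let f : GL (Fin d) (GaloisField p a) →* Matrix (Fin d) (Fin d) L :=
    (algebraMap (GaloisField p a) L).mapMatrix.toMonoidHom.comp (Units.coeHom _)
  have hf : Function.Injective f :=
    (Matrix.map_injective (algebraMap (GaloisField p a) L).injective).comp Units.val_injective
  obtain ⟨μ, hμ, hμs⟩ :=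
    Matrix.exists_mem_spectrum_orderOf_eq p hs hps ((orderOf_injective f hf y).trans hy)
  calc _ ≤ {k | k < orderOf y ∧ IsConj y (y ^ k)}.ncard :=
        Subgroup.relIndex_centralizer_normalizer_zpowers_le (isOfFinOrder_of_finite y)
    _ ≤ (spectrum L (f y)).ncard :=
        ncard_setOf_isConj_pow_le_ncard_spectrum f hμ (hμs.trans hy.symm)
          (Matrix.finite_spectrum _)
    _ ≤ d := (Matrix.ncard_spectrum_le _).trans_eq (Fintype.card_fin d)

/-- Let `p` and `s` be distinct primes, `d ≥ 1`, `a ≥ 1`, and let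
`y ∈ GL_d(F_{p^a})` have order `s`. Then `[N_{GL_d(p^a)}(⟨y⟩) : C_{GL_d(p^a)}(y)] ≤ d`. -/
theorem stmt3 (p s d a : ℕ) [Fact p.Prime] (hs : s.Prime) (hps : p ≠ s)
    (hd : 1 ≤ d) (ha : a ≠ 0)
    (y : GL (Fin d) (GaloisField p a)) (hy : orderOf y = s) :
    (Subgroup.centralizer {y}).relIndex (Subgroup.normalizer (Subgroup.zpowers y : Set (GL (Fin d) (GaloisField p a)))) ≤ d :=
  stmt3_general p s d a hs hps y hy
end

section
/- Let p and s be distinct primes, d, a natural numbers, and x ∈ PGL_d(p^a) an element of order s with gcd(s, p^a − 1) = 1. Then the index [N_{PGL_d(p^a)}(⟨x⟩) : C_{PGL_d(p^a)}(x)] is at most d. -/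
/-!
Lift `x` to `y ∈ GL_d(q)` with `y ^ s = 1`: the centre has exponent dividing `q - 1`, which is
prime to `s`, so `s`-torsion lifts uniquely along `GL_d(q) → PGL_d(q)`. Over an algebraic
closure `y` has an eigenvalue `ζ ≠ 1` (since `s ≠ p`, `y` is semisimple), of order `s`. If
`n ∈ N` conjugates `x` to `x ^ k`, uniqueness of lifts makes `y` conjugate to `y ^ k`, so `ζ ^ k`
is again an eigenvalue of `y`. As `ζ` and `x` have the same order, `n ↦ ζ ^ k` embeds `N / C`
into the at most `d` eigenvalues of `y`.
-/

open Polynomial Subgroup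

section CentralQuotient

variable {G : Type*} [Group G] {Z : Subgroup G} {s m : ℕ}

theorem exists_mk_eq_and_pow_eq_one_of_coprime [Z.Normal] (hZ : Z ≤ center G)
    (hsm : s.Coprime m) (hZm : ∀ z ∈ Z, z ^ m = 1) {x : G ⧸ Z} (hx : x ^ s = 1) :
    ∃ y : G, (y : G ⧸ Z) = x ∧ y ^ s = 1 := by
  obtain ⟨y, rfl⟩ := QuotientGroup.mk_surjective x
  have hyZ : y ^ s ∈ Z := by rwa [← QuotientGroup.eq_one_iff, QuotientGroup.mk_pow]
  obtain ⟨k, hk⟩ := exists_pow_eq_self_of_coprime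
    (hsm.coprime_dvd_right (orderOf_dvd_of_pow_eq_one (hZm _ hyZ)))
  have hwZ : ((y ^ s) ^ k)⁻¹ ∈ Z := inv_mem (pow_mem hyZ k)
  refine ⟨y * ((y ^ s) ^ k)⁻¹, ?_, ?_⟩
  · rw [QuotientGroup.mk_mul, (QuotientGroup.eq_one_iff _).mpr hwZ, mul_one]
  · rw [Commute.mul_pow (mem_center_iff.mp (hZ hwZ) y), inv_pow, ← pow_mul, mul_comm, pow_mul,
      hk, mul_inv_cancel]

theorem eq_of_mk_eq_of_pow_eq_one_of_coprime (hZ : Z ≤ center G) (hsm : s.Coprime m)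
    (hZm : ∀ z ∈ Z, z ^ m = 1) {y₁ y₂ : G} (h : (y₁ : G ⧸ Z) = y₂) (h₁ : y₁ ^ s = 1)
    (h₂ : y₂ ^ s = 1) : y₁ = y₂ := by
  have hz : y₁⁻¹ * y₂ ∈ Z := QuotientGroup.eq.mp h
  have hzs : (y₁⁻¹ * y₂) ^ s = 1 := by
    have := Commute.mul_pow (mem_center_iff.mp (hZ hz) y₁) s
    rwa [mul_inv_cancel_left, h₂, h₁, one_mul, eq_comm] at this
  exact inv_mul_eq_one.mp ((pow_eq_one_iff_of_coprime hsm).mp ⟨hzs, hZm _ hz⟩)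

end CentralQuotient

theorem inv_mul_mem_centralizer_singleton_iff {G : Type*} [Group G] {x g₁ g₂ : G} :
    g₁⁻¹ * g₂ ∈ centralizer {x} ↔ g₁ * x * g₁⁻¹ = g₂ * x * g₂⁻¹ := by
  rw [mem_centralizer_singleton_iff]
  constructor <;> intro h
  · calc g₁ * x * g₁⁻¹ = g₁ * (x * (g₁⁻¹ * g₂)) * g₂⁻¹ := by group
      _ = g₁ * (g₁⁻¹ * g₂ * x) * g₂⁻¹ := by rw [h]
      _ = g₂ * x * g₂⁻¹ := by group
  · calc g₁⁻¹ * g₂ * x = g₁⁻¹ * (g₂ * x * g₂⁻¹) * g₂ := by group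
      _ = g₁⁻¹ * (g₁ * x * g₁⁻¹) * g₂ := by rw [h]
      _ = x * (g₁⁻¹ * g₂) := by group

theorem relIndex_centralizer_le_card {G α : Type*} [Group G] {H : Subgroup G} {x : G}
    {f : G → α} {S : Finset α} (hS : ∀ g ∈ H, f (g * x * g⁻¹) ∈ S)
    (hf : ∀ g₁ ∈ H, ∀ g₂ ∈ H, f (g₁ * x * g₁⁻¹) = f (g₂ * x * g₂⁻¹) →
      g₁ * x * g₁⁻¹ = g₂ * x * g₂⁻¹) :
    (centralizer {x}).relIndex H ≤ S.card := by
  have hrel (g₁ g₂ : H) : g₁⁻¹ * g₂ ∈ (centralizer {x}).subgroupOf H ↔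
      (g₁ : G) * x * (g₁ : G)⁻¹ = g₂ * x * (g₂ : G)⁻¹ := by
    rw [mem_subgroupOf, Subgroup.coe_mul, Subgroup.coe_inv, inv_mul_mem_centralizer_singleton_iff]
  let φ : H ⧸ (centralizer {x}).subgroupOf H → S :=
    Quotient.lift (fun g => ⟨f (g * x * (g : G)⁻¹), hS g g.2⟩) fun g₁ g₂ h => by
      simp only [(hrel g₁ g₂).mp (QuotientGroup.leftRel_apply.mp h)]
  have hφ : Function.Injective φ := by
    rintro ⟨g₁⟩ ⟨g₂⟩ h
    exact Quotient.sound (QuotientGroup.leftRel_apply.mpr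
      ((hrel g₁ g₂).mpr (hf g₁ g₁.2 g₂ g₂.2 (congrArg Subtype.val h))))
  simpa [relIndex, index] using Nat.card_le_card_of_injective φ hφ

theorem relIndex_centralizer_normalizer_le_card {G M : Type*} [Group G] [Monoid M] {x : G}
    {ζ : M} (hx : IsOfFinOrder x) (hζ : orderOf ζ = orderOf x) {S : Finset M}
    (hS : ∀ g ∈ normalizer (zpowers x : Set G), ∀ k : ℕ,
      g * x * g⁻¹ = x ^ k → ζ ^ k ∈ S) :
    (centralizer {x}).relIndex (normalizer (zpowers x : Set G)) ≤ S.card := by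
  have hpow : ∀ g ∈ normalizer (zpowers x : Set G), ∃ k : ℕ, x ^ k = g * x * g⁻¹ :=
    fun g hg => hx.mem_powers_iff_mem_zpowers.mpr ((mem_normalizer_iff.mp hg x).mp (mem_zpowers x))
  let e : G → ℕ := Function.invFun (x ^ ·)
  have he : ∀ g ∈ normalizer (zpowers x : Set G), x ^ e (g * x * g⁻¹) = g * x * g⁻¹ :=
    fun g hg => Function.invFun_eq (hpow g hg)
  have hζfin : IsOfFinOrder ζ := orderOf_pos_iff.mp (hζ ▸ hx.orderOf_pos)
  refine relIndex_centralizer_le_card (f := fun c => ζ ^ e c)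
    (fun g hg => hS g hg _ (he g hg).symm) fun g₁ hg₁ g₂ hg₂ h => ?_
  rwa [← he g₁ hg₁, ← he g₂ hg₂, hx.pow_eq_pow_iff_modEq, ← hζ,
    ← hζfin.pow_eq_pow_iff_modEq]

section Spectrum

variable {K A : Type*} [Field K] [Ring A] [Algebra K A]

theorem pow_eq_one_of_mem_spectrum {a : A} {s : ℕ} (ha : a ^ s = 1) {ζ : K}
    (hζ : ζ ∈ spectrum K a) : ζ ^ s = 1 := by
  obtain _ | _ := subsingleton_or_nontrivial A
  · simp [spectrum.of_subsingleton] at hζ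
  simpa [ha, spectrum.one_eq] using spectrum.pow_mem_pow a s hζ

theorem exists_mem_spectrum_ne_one_of_pow_eq_one [IsAlgClosed K] [FiniteDimensional K A]
    {a : A} {s : ℕ} (hs : (s : K) ≠ 0) (ha : a ^ s = 1) (ha1 : a ≠ 1) :
    ∃ ζ ∈ spectrum K a, ζ ≠ 1 := by
  have : Nontrivial A := nontrivial_of_ne a 1 ha1
  by_contra! h
  have hσ : spectrum K a = {1} := by
    obtain ⟨μ, hμ⟩ := spectrum.nonempty_of_isAlgClosed_of_finiteDimensional K a
    exact Set.eq_singleton_iff_unique_mem.mpr ⟨h μ hμ ▸ hμ, h⟩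
  -- spectral mapping gives `σ (∑ aⁱ) = {s} ∌ 0`, while `(∑ aⁱ) (a - 1) = aˢ - 1 = 0`
  have hunit : IsUnit (∑ i ∈ Finset.range s, a ^ i) := by
    have := spectrum.map_polynomial_aeval_of_nonempty a (∑ i ∈ Finset.range s, X ^ i)
      (hσ ▸ Set.singleton_nonempty 1)
    simp only [map_sum, aeval_X_pow, hσ, Set.image_singleton, eval_finsetSum, eval_pow, eval_X,
      one_pow, Finset.sum_const, Finset.card_range, nsmul_eq_mul, mul_one] at this
    rw [← spectrum.zero_notMem_iff K, this]
    exact hs.symm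
  apply ha1
  rw [← sub_eq_zero, ← hunit.mul_right_eq_zero, geom_sum_mul, ha, sub_self]

theorem pow_mem_spectrum_of_conj_eq_pow {u a : Aˣ} {k : ℕ} (h : u * a * u⁻¹ = a ^ k) {ζ : K}
    (hζ : ζ ∈ spectrum K (a : A)) : ζ ^ k ∈ spectrum K (a : A) := by
  have := spectrum.pow_mem_pow (a : A) k hζ
  rwa [← Units.val_pow_eq_pow_val, ← h, Units.val_mul, Units.val_mul,
    spectrum.units_conjugate] at this

end Spectrum

theorem Matrix.card_roots_toFinset_charpoly_le {n R : Type*} [Fintype n] [DecidableEq n]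
    [CommRing R] [IsDomain R] [DecidableEq R] (A : Matrix n n R) :
    A.charpoly.roots.toFinset.card ≤ Fintype.card n :=
  (Multiset.toFinset_card_le _).trans ((card_roots' _).trans A.charpoly_natDegree_eq_dim.le)

namespace Matrix.GeneralLinearGroup

variable {n : Type*} [Fintype n] [DecidableEq n]

theorem map_injective {R S : Type*} [CommRing R] [CommRing S] {f : R →+* S}
    (hf : Function.Injective f) : Function.Injective (map (n := n) f) :=
  fun _ _ h => Units.ext (Matrix.map_injective hf (congrArg Units.val h))

theorem pow_card_sub_one_eq_one_of_mem_center {F : Type*} [Field F] [Finite F] {z : GL n F}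
    (hz : z ∈ center (GL n F)) : z ^ (Nat.card F - 1) = 1 := by
  rw [center_eq_range_scalar] at hz
  obtain ⟨u, rfl⟩ := hz
  rw [← map_pow, ← Nat.card_units, pow_card_eq_one', map_one]

end Matrix.GeneralLinearGroup

open Matrix in
theorem relIndex_centralizer_normalizer_le_card_of_coprime {n F : Type*} [Fintype n]
    [DecidableEq n] [Field F] [Finite F] {s : ℕ} (hs : s.Prime) (hsF : (s : F) ≠ 0)
    (hgcd : s.Coprime (Nat.card F - 1)) {x : GL n F ⧸ center (GL n F)} (hx : orderOf x = s) :
    (centralizer {x}).relIndex (normalizer (zpowers x : Set _)) ≤ Fintype.card n := by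
  classical
  have : Fact s.Prime := ⟨hs⟩
  have hZ : ∀ z ∈ center (GL n F), z ^ (Nat.card F - 1) = 1 :=
    fun _ => GeneralLinearGroup.pow_card_sub_one_eq_one_of_mem_center
  obtain ⟨y, rfl, hys⟩ :=
    exists_mk_eq_and_pow_eq_one_of_coprime le_rfl hgcd hZ (hx ▸ pow_orderOf_eq_one x)
  have hy1 : y ≠ 1 := by
    rintro rfl
    simp [hs.ne_one.symm] at hx
  let K := AlgebraicClosure F
  let ι : GL n F →* GL n K := GeneralLinearGroup.map (algebraMap F K)
  have hyK : (ι y : Matrix n n K) ^ s = 1 := by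
    rw [← Units.val_pow_eq_pow_val, ← map_pow, hys, map_one, Units.val_one]
  obtain ⟨ζ, hζ, hζ1⟩ := exists_mem_spectrum_ne_one_of_pow_eq_one (K := K)
    (by rwa [← map_natCast (algebraMap F K), _root_.map_ne_zero]) hyK
    (Units.val_eq_one.not.mpr ((map_ne_one_iff ι
      (GeneralLinearGroup.map_injective (algebraMap F K).injective)).mpr hy1))
  have hζs : orderOf ζ = s := orderOf_eq_prime (pow_eq_one_of_mem_spectrum hyK hζ) hζ1
  refine (relIndex_centralizer_normalizer_le_card (orderOf_pos_iff.mp (hx ▸ hs.pos))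
    (hζs.trans hx.symm) (S := (ι y : Matrix n n K).charpoly.roots.toFinset) ?_).trans
    (card_roots_toFinset_charpoly_le _)
  intro g _ k hk
  obtain ⟨g, rfl⟩ := QuotientGroup.mk_surjective g
  have hconj : g * y * g⁻¹ = y ^ k :=
    eq_of_mk_eq_of_pow_eq_one_of_coprime le_rfl hgcd hZ (by simpa using hk)
      (by simp [conj_pow, hys]) (by rw [pow_right_comm, hys, one_pow])
  rw [Multiset.mem_toFinset, mem_roots (charpoly_monic _).ne_zero,
    ← mem_spectrum_iff_isRoot_charpoly]
  exact pow_mem_spectrum_of_conj_eq_pow (by simpa using congrArg ι hconj) hζ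

theorem stmt4_general (p s d a : ℕ) [Fact p.Prime] (hs : s.Prime) (hps : p ≠ s)
    (ha : a ≠ 0) (hgcd : Nat.gcd s (p ^ a - 1) = 1)
    (x : GL (Fin d) (GaloisField p a) ⧸ Subgroup.center (GL (Fin d) (GaloisField p a)))
    (hx : orderOf x = s) :
    (Subgroup.centralizer {x}).relIndex (Subgroup.normalizer (Subgroup.zpowers x : Set _)) ≤ d := by
  have hsF : (s : GaloisField p a) ≠ 0 := by
    rw [Ne, CharP.cast_eq_zero_iff (GaloisField p a) p]
    exact fun hp => hps ((Nat.prime_dvd_prime_iff_eq Fact.out hs).mp hp)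
  simpa using relIndex_centralizer_normalizer_le_card_of_coprime hs hsF
    (by rwa [GaloisField.card p a ha]) hx

/-- Let `p` and `s` be distinct primes, `d, a ≥ 1`, and let `x ∈ PGL_d(p^a)`
have order `s` with `gcd(s, p^a - 1) = 1`. Then
`[N_{PGL_d(p^a)}(⟨x⟩) : C_{PGL_d(p^a)}(x)] ≤ d`. -/
theorem stmt4 (p s d a : ℕ) [Fact p.Prime] (hs : s.Prime) (hps : p ≠ s)
    (hd : 1 ≤ d) (ha : a ≠ 0) (hgcd : Nat.gcd s (p ^ a - 1) = 1)
    (x : GL (Fin d) (GaloisField p a) ⧸ Subgroup.center (GL (Fin d) (GaloisField p a)))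
    (hx : orderOf x = s) :
    (Subgroup.centralizer {x}).relIndex (Subgroup.normalizer (Subgroup.zpowers x : Set _)) ≤ d :=
  stmt4_general p s d a hs hps ha hgcd x hx
end
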